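/- arXiv:2304.12787 — 6 statements merged into one kernel-verified Lean document; each statement's English description precedes it below -/
import Mathlib

section
/- Let p > 2 be prime, n ∈ ℕ, and q(x,y) = ax² + bxy + cy² + dx + ey + f ∈ ℤ[x,y] with p ∤ a and p ∤ Δ, where Δ is the determinant of the associated matrix (equivalently, 8Δ is coprime to p). Then the number of solutions (x,y) modulo pⁿ of the congruence q(x,y) ≡ 0 (mod pⁿ) equals pⁿ⁻¹ · (p − χ(b² − 4ac)), where χ denotes the Legendre symbol modulo p. -/
/-!
Over `𝔽_p`, for fixed `y` the number of roots of `q(·, y)` is `1 + χ(D(y))`, where `D(y)` is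
the discriminant in `x`. It is a quadratic polynomial in `y` with leading coefficient `b² - 4ac`
and discriminant `-8a · 8Δ ≠ 0`, and for such a polynomial `∑_y χ(D(y)) = -χ(b² - 4ac)` (reduce to
`∑_x χ(x² - N) = -1`, i.e. to counting the `p - 1` points of the hyperbola `u v = N`).

Since `8Δ` is a combination of `q`, `∂ₓq` and `∂ᵧq`, the gradient of `q` does not vanish at any
zero mod `p`. Hence each zero `(x, y)` mod `p^k` (`k ≥ 1`) lifts to exactly `p` zeros mod
`p^(k+1)`: the lifts `(x + p^k s, y + p^k t)` are zeros iff `(s, t)` solves a linear equation with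
nonzero coefficients mod `p`.
-/

open Finset

theorem card_subtype_prod_eq_sum {α β : Type*} [Finite α] [Fintype β] (P : α → β → Prop) :
    Nat.card {z : α × β // P z.1 z.2} = ∑ b, Nat.card {a // P a b} := by
  let swap : {z : α × β // P z.1 z.2} ≃ {z : β × α // P z.2 z.1} :=
    (Equiv.prodComm α β).subtypeEquiv fun _ => Iff.rfl
  rw [Nat.card_congr (swap.trans (Equiv.subtypeProdEquivSigmaSubtype fun b a => P a b)),
    Nat.card_sigma]

theorem card_mul_eq {G₀ : Type*} [GroupWithZero G₀] {N : G₀} (hN : N ≠ 0) :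
    Nat.card {z : G₀ × G₀ // z.1 * z.2 = N} = Nat.card G₀ - 1 := by
  rw [← Nat.card_units]
  refine Nat.card_congr
    { toFun z := Units.mk0 z.1.1 (left_ne_zero_of_mul (z.2 ▸ hN))
      invFun u := ⟨(u, u⁻¹ * N), by simp⟩
      left_inv z := ?_
      right_inv u := by ext; rfl }
  have : z.1.1 ≠ 0 := left_ne_zero_of_mul (z.2 ▸ hN)
  ext
  · rfl
  · simp [← z.2, this]

section FiniteField

variable {F : Type*} [Field F] [Fintype F] [DecidableEq F]

theorem card_sq_eq (hF : ringChar F ≠ 2) (a : F) :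
    (Nat.card {x : F // x ^ 2 = a} : ℤ) = quadraticChar F a + 1 := by
  rw [← quadraticChar_card_sqrts hF a, Set.toFinset_card, Nat.card_eq_fintype_card]
  rfl

theorem sum_quadraticChar_sq_sub (hF : ringChar F ≠ 2) {N : F} (hN : N ≠ 0) :
    ∑ x : F, quadraticChar F (x ^ 2 - N) = -1 := by
  have h2 : (2 : F) ≠ 0 := Ring.two_ne_zero hF
  -- count the points of the hyperbola `s² = x² - N` in two ways
  let toProduct : {z : F × F // z.1 ^ 2 = z.2 ^ 2 - N} ≃ {z : F × F // z.1 * z.2 = N} :=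
    { toFun z := ⟨(z.1.2 - z.1.1, z.1.2 + z.1.1), by linear_combination -z.2⟩
      invFun z := ⟨((z.1.2 - z.1.1) / 2, (z.1.1 + z.1.2) / 2), by
        field_simp; linear_combination -4 * z.2⟩
      left_inv z := by ext <;> field_simp <;> ring
      right_inv z := by ext <;> field_simp <;> ring }
  have hcount := congrArg (fun n : ℕ => (n : ℤ)) (Nat.card_congr toProduct)
  rw [card_mul_eq hN, card_subtype_prod_eq_sum (fun s x : F => s ^ 2 = x ^ 2 - N),
    Nat.cast_sum, Nat.cast_sub Nat.card_pos,
    sum_congr rfl fun x _ => card_sq_eq hF (x ^ 2 - N)] at hcount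
  simp only [sum_add_distrib, sum_const, card_univ, nsmul_eq_mul, mul_one,
    Nat.cast_one, Nat.card_eq_fintype_card] at hcount
  linarith

theorem sum_quadraticChar_linear (hF : ringChar F ≠ 2) {β : F} (hβ : β ≠ 0) (γ : F) :
    ∑ x : F, quadraticChar F (β * x + γ) = 0 := by
  rw [← quadraticChar_sum_zero hF]
  exact ((Equiv.mulLeft₀ β hβ).trans (Equiv.addRight γ)).sum_comp (quadraticChar F)

theorem sum_quadraticChar_quadratic (hF : ringChar F ≠ 2) {α β γ : F}
    (hdisc : discrim α β γ ≠ 0) :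
    ∑ x : F, quadraticChar F (α * x ^ 2 + β * x + γ) = -quadraticChar F α := by
  by_cases hα : α = 0
  · have hβ : β ≠ 0 := by rintro rfl; simp [hα, discrim] at hdisc
    simp only [hα, zero_mul, zero_add, quadraticChar_zero, neg_zero]
    exact sum_quadraticChar_linear hF hβ γ
  have h2α : 2 * α ≠ 0 := mul_ne_zero (Ring.two_ne_zero hF) hα
  have hχα : quadraticChar F α * quadraticChar F α = 1 := by
    rw [← sq, quadraticChar_sq_one hα]
  have hshift : ∀ x : F, quadraticChar F (α * x ^ 2 + β * x + γ)
      = quadraticChar F α * quadraticChar F ((2 * α * x + β) ^ 2 - discrim α β γ) := by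
    intro x
    have h4α : (2 * α * x + β) ^ 2 - discrim α β γ
        = (2 : F) ^ 2 * α * (α * x ^ 2 + β * x + γ) := by
      rw [discrim]; ring
    rw [h4α, map_mul, map_mul, quadraticChar_sq_one' (Ring.two_ne_zero hF), one_mul,
      ← mul_assoc, hχα, one_mul]
  have hreindex : ∑ x : F, quadraticChar F ((2 * α * x + β) ^ 2 - discrim α β γ)
      = ∑ u : F, quadraticChar F (u ^ 2 - discrim α β γ) :=
    ((Equiv.mulLeft₀ (2 * α) h2α).trans (Equiv.addRight β)).sum_comp
      (fun u => quadraticChar F (u ^ 2 - discrim α β γ))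
  rw [sum_congr rfl fun x _ => hshift x, ← mul_sum, hreindex,
    sum_quadraticChar_sq_sub hF hdisc, mul_neg_one]

theorem card_quadratic_eq_zero (hF : ringChar F ≠ 2) {α : F} (hα : α ≠ 0) (β γ : F) :
    (Nat.card {x : F // α * x ^ 2 + β * x + γ = 0} : ℤ)
      = quadraticChar F (discrim α β γ) + 1 := by
  have : NeZero (2 : F) := ⟨Ring.two_ne_zero hF⟩
  have h2α : 2 * α ≠ 0 := mul_ne_zero two_ne_zero hα
  rw [← card_sq_eq hF, Nat.card_congr (((Equiv.mulLeft₀ (2 * α) h2α).trans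
    (Equiv.addRight β)).subtypeEquiv fun x => ?_)]
  rw [sq x, quadratic_eq_zero_iff_discrim_eq_sq hα, eq_comm]
  rfl

end FiniteField

theorem Ideal.card_linear_eq_zero_of_isUnit {R : Type*} [CommRing R] (I : Ideal R) {c u v : R}
    (hc : c ∈ I) (hv : IsUnit v) :
    Nat.card {hk : I × I // c + hk.1 * u + hk.2 * v = 0} = Nat.card I := by
  set w : R := ↑hv.unit⁻¹
  have hwv : w * v = 1 := hv.val_inv_mul
  refine Nat.card_congr
    { toFun hk := hk.1.1
      invFun h := ⟨(h, ⟨-(c + h * u) * w,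
          I.mul_mem_right w (I.neg_mem (I.add_mem hc (I.mul_mem_right u h.2)))⟩), by
        linear_combination -(c + h * u) * hwv⟩
      left_inv hk := by
        ext
        · rfl
        · linear_combination -w * hk.2 + hk.1.2.1 * hwv
      right_inv h := rfl }

theorem Ideal.card_linear_eq_zero {R : Type*} [CommRing R] (I : Ideal R) {c u v : R}
    (hc : c ∈ I) (huv : IsUnit u ∨ IsUnit v) :
    Nat.card {hk : I × I // c + hk.1 * u + hk.2 * v = 0} = Nat.card I := by
  rcases huv with hu | hv
  · let swap : {hk : I × I // c + hk.1 * u + hk.2 * v = 0}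
        ≃ {hk : I × I // c + hk.1 * v + hk.2 * u = 0} :=
      (Equiv.prodComm I I).subtypeEquiv fun hk => by
        simp only [Equiv.prodComm_apply, Prod.fst_swap, Prod.snd_swap]
        constructor <;> intro h <;> linear_combination h
    rw [Nat.card_congr swap, I.card_linear_eq_zero_of_isUnit hc hu]
  · exact I.card_linear_eq_zero_of_isUnit hc hv

theorem RingHom.card_ker_mul_card {R S : Type*} [Ring R] [Ring S] (π : R →+* S)
    (hπ : Function.Surjective π) : Nat.card (RingHom.ker π) * Nat.card S = Nat.card R := by
  let f := π.toAddMonoidHom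
  have hker : Nat.card (RingHom.ker π) = Nat.card f.ker := rfl
  rw [hker, ← AddSubgroup.card_top (G := S), ← f.range_eq_top_of_surjective hπ,
    ← AddSubgroup.index_ker, f.ker.card_mul_index]

namespace ZMod

theorem mul_eq_zero_of_mem_ker_castHom {m n : ℕ} [NeZero n] (hmn : m ∣ n) (hn : n ∣ m * m)
    {x y : ZMod n} (hx : x ∈ RingHom.ker (castHom hmn (ZMod m)))
    (hy : y ∈ RingHom.ker (castHom hmn (ZMod m))) : x * y = 0 := by
  rw [RingHom.mem_ker, castHom_apply, cast_eq_val, natCast_eq_zero_iff] at hx hy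
  rw [← natCast_zmod_val x, ← natCast_zmod_val y, ← Nat.cast_mul, natCast_eq_zero_iff]
  exact hn.trans (Nat.mul_dvd_mul hx hy)

theorem isUnit_of_castHom_ne_zero {p m : ℕ} (hp : p.Prime) (hm : m ≠ 0) {x : ZMod (p ^ m)}
    (hx : castHom (dvd_pow_self p hm) (ZMod p) x ≠ 0) : IsUnit x := by
  have : NeZero (p ^ m) := ⟨pow_ne_zero m hp.ne_zero⟩
  rw [← natCast_zmod_val x, isUnit_natCast_iff_not_dvd_pow hp (Nat.pos_of_ne_zero hm)]
  rwa [castHom_apply, cast_eq_val, Ne, natCast_eq_zero_iff] at hx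

theorem card_ker_castHom_pow_succ {p : ℕ} (hp : p.Prime) (k : ℕ) :
    Nat.card (RingHom.ker (castHom (pow_dvd_pow p k.le_succ) (ZMod (p ^ k)))) = p := by
  have h := RingHom.card_ker_mul_card _ (castHom_surjective (pow_dvd_pow p k.le_succ))
  rw [Nat.card_zmod, Nat.card_zmod] at h
  exact Nat.eq_of_mul_eq_mul_right (pow_pos hp.pos k) (h.trans (pow_succ' p k))

end ZMod

structure Conic (R : Type*) where
  a : R
  b : R
  c : R
  d : R
  e : R
  f : R

namespace Conic

section CommRing

variable {R S : Type*} [CommRing R] [CommRing S] (Q : Conic R)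

def eval (x y : R) : R := Q.a * x ^ 2 + Q.b * x * y + Q.c * y ^ 2 + Q.d * x + Q.e * y + Q.f

def zeros : Set (R × R) := {z | Q.eval z.1 z.2 = 0}

theorem mem_zeros {z : R × R} : z ∈ Q.zeros ↔ Q.eval z.1 z.2 = 0 := Iff.rfl

def derivX (x y : R) : R := 2 * Q.a * x + Q.b * y + Q.d

def derivY (x y : R) : R := Q.b * x + 2 * Q.c * y + Q.e

def discr : R := Q.b ^ 2 - 4 * Q.a * Q.c

/-- The determinant of `!![2a, b, d; b, 2c, e; d, e, 2f]`, i.e. `8 Δ`. -/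
def det : R :=
  8 * Q.a * Q.c * Q.f + 2 * Q.b * Q.d * Q.e - 2 * Q.a * Q.e ^ 2 - 2 * Q.c * Q.d ^ 2
    - 2 * Q.f * Q.b ^ 2

def map (φ : R →+* S) : Conic S := ⟨φ Q.a, φ Q.b, φ Q.c, φ Q.d, φ Q.e, φ Q.f⟩

theorem map_map {T : Type*} [CommRing T] (φ : R →+* S) (ψ : S →+* T) :
    (Q.map φ).map ψ = Q.map (ψ.comp φ) := rfl

theorem map_eval (φ : R →+* S) (x y : R) : φ (Q.eval x y) = (Q.map φ).eval (φ x) (φ y) := by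
  simp [eval, map]

theorem map_derivX (φ : R →+* S) (x y : R) :
    φ (Q.derivX x y) = (Q.map φ).derivX (φ x) (φ y) := by
  simp [derivX, map, map_ofNat]

theorem map_derivY (φ : R →+* S) (x y : R) :
    φ (Q.derivY x y) = (Q.map φ).derivY (φ x) (φ y) := by
  simp [derivY, map, map_ofNat]

theorem map_det (φ : R →+* S) : φ Q.det = (Q.map φ).det := by
  simp [det, map, map_ofNat]

theorem map_discr (φ : R →+* S) : φ Q.discr = (Q.map φ).discr := by
  simp [discr, map, map_ofNat]

-- `M (x, y, 1) = (∂ₓq, ∂ᵧq, 2q - x ∂ₓq - y ∂ᵧq)` for `M = !![2a, b, d; b, 2c, e; d, e, 2f]`;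
-- this is the last entry of `adj M * M * (x, y, 1) = det M • (x, y, 1)`.
theorem det_eq (x y : R) :
    Q.det = (Q.b * Q.e - 2 * Q.c * Q.d) * Q.derivX x y
      + (Q.b * Q.d - 2 * Q.a * Q.e) * Q.derivY x y
      + (4 * Q.a * Q.c - Q.b ^ 2) * (2 * Q.eval x y - x * Q.derivX x y - y * Q.derivY x y) := by
  simp only [det, eval, derivX, derivY]; ring

theorem derivX_ne_zero_or_derivY_ne_zero (hdet : Q.det ≠ 0) {x y : R} (h : Q.eval x y = 0) :
    Q.derivX x y ≠ 0 ∨ Q.derivY x y ≠ 0 := by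
  by_contra! hxy
  exact hdet (by rw [Q.det_eq x y, h, hxy.1, hxy.2]; ring)

theorem eval_add_of_mul_eq_zero {x y h k : R} (hh : h * h = 0) (hk : k * k = 0)
    (hhk : h * k = 0) :
    Q.eval (x + h) (y + k) = Q.eval x y + h * Q.derivX x y + k * Q.derivY x y := by
  simp only [eval, derivX, derivY]
  linear_combination Q.a * hh + Q.b * hhk + Q.c * hk

end CommRing

theorem card_zeros_of_field {F : Type*} [Field F] [Fintype F] [DecidableEq F]
    (hF : ringChar F ≠ 2) (Q : Conic F) (ha : Q.a ≠ 0) (hdet : Q.det ≠ 0) :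
    (Nat.card Q.zeros : ℤ) = Fintype.card F - quadraticChar F Q.discr := by
  have h2 : (2 : F) ≠ 0 := Ring.two_ne_zero hF
  have hslice : ∀ y : F, (Nat.card {x : F // Q.eval x y = 0} : ℤ) = quadraticChar F
      (Q.discr * y ^ 2 + (2 * Q.b * Q.d - 4 * Q.a * Q.e) * y + (Q.d ^ 2 - 4 * Q.a * Q.f)) + 1 := by
    intro y
    have heval : ∀ x, Q.eval x y
        = Q.a * x ^ 2 + (Q.b * y + Q.d) * x + (Q.c * y ^ 2 + Q.e * y + Q.f) :=
      fun x => by simp only [eval]; ring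
    have hdisc : discrim Q.a (Q.b * y + Q.d) (Q.c * y ^ 2 + Q.e * y + Q.f)
        = Q.discr * y ^ 2 + (2 * Q.b * Q.d - 4 * Q.a * Q.e) * y + (Q.d ^ 2 - 4 * Q.a * Q.f) := by
      simp only [discrim, discr]; ring
    simp only [heval]
    rw [← hdisc, card_quadratic_eq_zero hF ha]
  have hdisc : discrim Q.discr (2 * Q.b * Q.d - 4 * Q.a * Q.e) (Q.d ^ 2 - 4 * Q.a * Q.f) ≠ 0 := by
    have : discrim Q.discr (2 * Q.b * Q.d - 4 * Q.a * Q.e) (Q.d ^ 2 - 4 * Q.a * Q.f)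
        = -(2 ^ 3 * Q.a * Q.det) := by
      simp only [discrim, discr, det]; ring
    rw [this]
    exact neg_ne_zero.mpr (mul_ne_zero (mul_ne_zero (pow_ne_zero 3 h2) ha) hdet)
  rw [zeros, Set.coe_ofPred, card_subtype_prod_eq_sum (fun x y => Q.eval x y = 0), Nat.cast_sum,
    sum_congr rfl fun y _ => hslice y, sum_add_distrib, sum_quadraticChar_quadratic hF hdisc]
  simp only [sum_const, card_univ, nsmul_eq_mul, mul_one]
  ring

section Lift

variable {R S : Type*} [CommRing R] [CommRing S] [Finite R]

theorem card_zeros_eq_mul_card_ker (Q : Conic R) (π : R →+* S) (hπ : Function.Surjective π)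
    (hsq : ∀ h ∈ RingHom.ker π, ∀ k ∈ RingHom.ker π, h * k = 0)
    (hunit : ∀ x y, π (Q.eval x y) = 0 → IsUnit (Q.derivX x y) ∨ IsUnit (Q.derivY x y)) :
    Nat.card Q.zeros = Nat.card (Q.map π).zeros * Nat.card (RingHom.ker π) := by
  have : Finite S := Finite.of_surjective π hπ
  have : Fintype (Q.map π).zeros := Fintype.ofFinite _
  let reduce : Q.zeros → (Q.map π).zeros := fun z =>
    ⟨(π z.1.1, π z.1.2), by
      rw [mem_zeros, ← map_eval, Q.mem_zeros.mp z.2, map_zero]⟩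
  suffices hfiber : ∀ w, Nat.card {z // reduce z = w} = Nat.card (RingHom.ker π) by
    rw [← Nat.card_congr (Equiv.sigmaFiberEquiv reduce), Nat.card_sigma,
      sum_congr rfl fun w _ => hfiber w, sum_const, card_univ, smul_eq_mul,
      Fintype.card_eq_nat_card]
  intro w
  obtain ⟨x₀, hx₀⟩ := hπ w.1.1
  obtain ⟨y₀, hy₀⟩ := hπ w.1.2
  have hc : Q.eval x₀ y₀ ∈ RingHom.ker π := by
    rw [RingHom.mem_ker, map_eval, hx₀, hy₀]
    exact w.2
  have hlin : ∀ {h k : R}, h ∈ RingHom.ker π → k ∈ RingHom.ker π →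
      Q.eval (x₀ + h) (y₀ + k)
        = Q.eval x₀ y₀ + h * Q.derivX x₀ y₀ + k * Q.derivY x₀ y₀ :=
    fun hh hk => Q.eval_add_of_mul_eq_zero (hsq _ hh _ hh) (hsq _ hk _ hk) (hsq _ hh _ hk)
  rw [← (RingHom.ker π).card_linear_eq_zero hc (hunit x₀ y₀ hc)]
  have hred (z : {z // reduce z = w}) : π z.1.1.1 = w.1.1 ∧ π z.1.1.2 = w.1.2 :=
    Prod.ext_iff.mp (congrArg Subtype.val z.2)
  have hx (z : {z // reduce z = w}) : z.1.1.1 - x₀ ∈ RingHom.ker π := by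
    rw [RingHom.mem_ker, map_sub, hx₀, (hred z).1, sub_self]
  have hy (z : {z // reduce z = w}) : z.1.1.2 - y₀ ∈ RingHom.ker π := by
    rw [RingHom.mem_ker, map_sub, hy₀, (hred z).2, sub_self]
  exact Nat.card_congr
    { toFun z := ⟨(⟨z.1.1.1 - x₀, hx z⟩, ⟨z.1.1.2 - y₀, hy z⟩), by
        rw [← hlin (hx z) (hy z), add_sub_cancel, add_sub_cancel]
        exact z.1.2⟩
      invFun hk := ⟨⟨(x₀ + hk.1.1.1, y₀ + hk.1.2.1), by
          rw [mem_zeros, hlin hk.1.1.2 hk.1.2.2]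
          exact hk.2⟩, by
        ext
        · simp only [reduce, map_add, hx₀, add_eq_left, ← RingHom.mem_ker, hk.1.1.2]
        · simp only [reduce, map_add, hy₀, add_eq_left, ← RingHom.mem_ker, hk.1.2.2]⟩
      left_inv z := by ext <;> simp
      right_inv hk := by ext <;> simp }

end Lift

def reduceMod (Q : Conic ℤ) (n : ℕ) : Conic (ZMod n) := Q.map (Int.castRingHom (ZMod n))

theorem reduceMod_map_castHom (Q : Conic ℤ) {m n : ℕ} (h : m ∣ n) :
    (Q.reduceMod n).map (ZMod.castHom h (ZMod m)) = Q.reduceMod m := by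
  rw [reduceMod, reduceMod, map_map, RingHom.ext_int ((ZMod.castHom h _).comp _) _]

theorem card_zeros_reduceMod_pow_succ (Q : Conic ℤ) {p : ℕ} (hp : p.Prime)
    (hdet : (Q.reduceMod p).det ≠ 0) (n : ℕ) :
    Nat.card (Q.reduceMod (p ^ (n + 1))).zeros = p ^ n * Nat.card (Q.reduceMod p).zeros := by
  induction n with
  | zero => rw [zero_add, pow_one, pow_zero, one_mul]
  | succ n ih =>
    have : NeZero (p ^ (n + 2)) := ⟨pow_ne_zero _ hp.ne_zero⟩
    let π := ZMod.castHom (pow_dvd_pow p (n + 1).le_succ) (ZMod (p ^ (n + 1)))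
    have hsq : ∀ h ∈ RingHom.ker π, ∀ k ∈ RingHom.ker π, h * k = 0 := fun h hh k hk =>
      ZMod.mul_eq_zero_of_mem_ker_castHom _ (by rw [← pow_add]; exact pow_dvd_pow p (by omega))
        hh hk
    have hunit : ∀ x y, π ((Q.reduceMod (p ^ (n + 2))).eval x y) = 0 →
        IsUnit ((Q.reduceMod (p ^ (n + 2))).derivX x y) ∨
          IsUnit ((Q.reduceMod (p ^ (n + 2))).derivY x y) := by
      intro x y hxy
      have hρ : ((ZMod.castHom (dvd_pow_self p n.succ_ne_zero) (ZMod p)).comp π)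
          ((Q.reduceMod (p ^ (n + 2))).eval x y) = 0 := by
        rw [RingHom.comp_apply, hxy, map_zero]
      rw [ZMod.castHom_comp, map_eval, reduceMod_map_castHom] at hρ
      refine ((Q.reduceMod p).derivX_ne_zero_or_derivY_ne_zero hdet hρ).imp
        (fun h => ZMod.isUnit_of_castHom_ne_zero hp (n + 1).succ_ne_zero ?_)
        (fun h => ZMod.isUnit_of_castHom_ne_zero hp (n + 1).succ_ne_zero ?_)
      · rwa [map_derivX, reduceMod_map_castHom]
      · rwa [map_derivY, reduceMod_map_castHom]
    rw [card_zeros_eq_mul_card_ker _ π (ZMod.castHom_surjective _) hsq hunit,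
      reduceMod_map_castHom, ih, ZMod.card_ker_castHom_pow_succ hp]
    ring

end Conic

/-- The number of solutions `(x,y)` modulo `pⁿ` of
`a x² + b x y + c y² + d x + e y + f ≡ 0 (mod pⁿ)` equals
`pⁿ⁻¹ (p − χ(b²−4ac))`, where `χ` is the Legendre symbol mod `p`,
provided `p ∤ a` and `p ∤ 8Δ`. -/
theorem count_solutions_mod_prime_power
    (p : ℕ) [Fact p.Prime] (hp : Odd p) (n : ℕ) (hn : 1 ≤ n)
    (a b c d e f : ℤ)
    (ha : ¬ (p : ℤ) ∣ a)
    (hΔ : ¬ (p : ℤ) ∣ (8*a*c*f + 2*b*d*e - 2*a*e^2 - 2*c*d^2 - 2*f*b^2)) :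
    (Nat.card {xy : ZMod (p^n) × ZMod (p^n) //
        (a : ZMod (p^n))*xy.1^2 + b*xy.1*xy.2 + c*xy.2^2
          + d*xy.1 + e*xy.2 + f = 0} : ℤ)
      = p^(n-1) * (p - legendreSym p (b^2 - 4*a*c)) := by
  let Q : Conic ℤ := ⟨a, b, c, d, e, f⟩
  have hchar : ringChar (ZMod p) ≠ 2 := by
    rw [ZMod.ringChar_zmod_n]; rintro rfl; exact Nat.not_odd_iff_even.mpr even_two hp
  have ha' : (Q.reduceMod p).a ≠ 0 := (ZMod.intCast_zmod_eq_zero_iff_dvd a p).not.mpr ha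
  have hdet : (Q.reduceMod p).det ≠ 0 := by
    rw [Conic.reduceMod, ← Conic.map_det]
    exact (ZMod.intCast_zmod_eq_zero_iff_dvd _ p).not.mpr hΔ
  obtain ⟨m, rfl⟩ : ∃ m, n = m + 1 := ⟨n - 1, by omega⟩
  have hcount := Q.card_zeros_reduceMod_pow_succ Fact.out hdet m
  have hfield := Conic.card_zeros_of_field hchar _ ha' hdet
  have hdiscr : (Q.reduceMod p).discr = ((b ^ 2 - 4 * a * c : ℤ) : ZMod p) :=
    (Q.map_discr _).symm
  rw [ZMod.card, hdiscr] at hfield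
  rw [Nat.add_sub_cancel]
  calc _ = (p ^ m * Nat.card (Q.reduceMod p).zeros : ℤ) := by exact_mod_cast hcount
    _ = _ := by rw [hfield]; rfl
end

section
/- Let p > 2 be prime and q(x,y) = ax² + bxy + cy² + dx + ey + f ∈ ℤ[x,y] with p ∤ a and 8Δ coprime to p. Then the number of solutions (x,y) ∈ (ℤ/pℤ)² of q(x,y) ≡ 0 (mod p) is p − χ(b² − 4ac), where χ is the Legendre symbol mod p. -/
/-!
Completing the square in `x` gives `4a · q(x, y) = (2ax + by + d)² - g(y)` with
`g(y) = D y² + B y + C`, `D = b² - 4ac`, whose discriminant `B² - 4DC = -16a · 4Δ` is nonzero.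
Counting square roots with the quadratic character `χ`, the conic has
`∑_y (1 + χ(g y)) = p + ∑_y χ(g y)` points. If `D = 0` then `g` is a nonconstant linear map
and the character sum vanishes; otherwise completing the square once more turns it into
`χ(D) ∑_z χ(z² - k)` with `k ≠ 0`, and
`∑_z χ(z² - k) = ∑_t χ(t (t - k)) = χ(-1) J(χ, χ) = -1`.
-/

open Finset

section QuadraticCharSums

variable {F : Type*} [Field F] [Fintype F]

lemma sum_comp_mul_add {M : Type*} [AddCommMonoid M] {B : F} (hB : B ≠ 0) (C : F) (g : F → M) :
    ∑ y, g (B * y + C) = ∑ y, g y :=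
  Fintype.sum_equiv ((Equiv.mulLeft₀ B hB).trans (Equiv.addRight C)) _ _ fun _ => rfl

variable [DecidableEq F]

local notation "χ" => quadraticChar F

variable (hF : ringChar F ≠ 2)
include hF

lemma sum_comp_sq (g : F → ℤ) : ∑ z, g (z ^ 2) = ∑ t, (χ t + 1) * g t := by
  rw [← Finset.sum_fiberwise' univ (fun z : F => z ^ 2)]
  refine Fintype.sum_congr _ _ fun t => ?_
  rw [sum_const, nsmul_eq_mul, ← quadraticChar_card_sqrts hF t, Set.toFinset_ofPred]

lemma quadraticChar_sum_mul_sub {k : F} (hk : k ≠ 0) : ∑ t, χ (t * (t - k)) = -1 := by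
  have hjacobi : jacobiSum χ χ = -χ (-1) := by
    simpa only [(quadraticChar_isQuadratic F).inv] using
      jacobiSum_nontrivial_inv (quadraticChar_ne_one hF)
  have hscale : ∀ u, χ (k * u * (k * u - k)) = χ (-1) * (χ u * χ (1 - u)) := fun u => by
    rw [show k * u * (k * u - k) = k ^ 2 * (-1 * (u * (1 - u))) by ring, map_mul,
      quadraticChar_sq_one' hk, one_mul, map_mul, map_mul]
  calc ∑ t, χ (t * (t - k))
      = ∑ u, χ (k * u * (k * u - k)) :=
        (Fintype.sum_equiv (Equiv.mulLeft₀ k hk) _ _ fun _ => rfl).symm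
    _ = χ (-1) * jacobiSum χ χ := by simp only [hscale, ← mul_sum]; rfl
    _ = -1 := by rw [hjacobi, mul_neg, ← map_mul, neg_one_mul, neg_neg, map_one]

lemma quadraticChar_sum_sq_sub {k : F} (hk : k ≠ 0) : ∑ z, χ (z ^ 2 - k) = -1 := by
  have hshift : ∑ t, χ (t - k) = 0 := by
    simpa only [one_mul, ← sub_eq_add_neg] using
      (sum_comp_mul_add one_ne_zero (-k) χ).trans (quadraticChar_sum_zero hF)
  rw [sum_comp_sq hF (fun t => χ (t - k))]
  simp only [add_mul, one_mul, ← map_mul, sum_add_distrib, hshift,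
    quadraticChar_sum_mul_sub hF hk, add_zero]

lemma quadraticChar_sum_quadratic {D B C : F} (hdisc : B ^ 2 - 4 * D * C ≠ 0) :
    ∑ y, χ (D * y ^ 2 + B * y + C) = -χ D := by
  by_cases hD : D = 0
  · subst hD
    have hB : B ≠ 0 := fun hB => hdisc (by rw [hB]; ring)
    simpa only [zero_mul, zero_add, quadraticChar_zero, neg_zero] using
      (sum_comp_mul_add hB C χ).trans (quadraticChar_sum_zero hF)
  have h2 : (2 : F) ≠ 0 := Ring.two_ne_zero hF
  have h4 : (4 : F) ≠ 0 := by
    rw [show (4 : F) = 2 ^ 2 by norm_num]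
    exact pow_ne_zero 2 h2
  set k := (B ^ 2 - 4 * D * C) / 4 with hk_def
  have hk : k ≠ 0 := div_ne_zero hdisc h4
  have hcomplete : ∀ y, D * y ^ 2 + B * y + C = D⁻¹ * ((D * y + B / 2) ^ 2 - k) := fun y => by
    rw [hk_def]
    field_simp
    ring
  have hinv : χ D⁻¹ = χ D := by
    rw [show D⁻¹ = D * D⁻¹ ^ 2 by field_simp, map_mul, quadraticChar_sq_one' (inv_ne_zero hD),
      mul_one]
  simp only [hcomplete, map_mul, ← mul_sum]
  rw [sum_comp_mul_add hD (B / 2) fun z => χ (z ^ 2 - k), quadraticChar_sum_sq_sub hF hk, hinv,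
    mul_neg_one]

lemma natCard_sq_eq_apply (g : F → F) :
    (Nat.card {yu : F × F // yu.2 ^ 2 = g yu.1} : ℤ) = Fintype.card F + ∑ y, χ (g y) := by
  classical
  have hfiber : ∀ t : F, (Fintype.card {u : F // u ^ 2 = t} : ℤ) = χ t + 1 := fun t => by
    rw [Fintype.card_subtype, ← quadraticChar_card_sqrts hF t, Set.toFinset_ofPred]
  rw [Nat.card_eq_fintype_card,
    Fintype.card_congr (Equiv.subtypeProdEquivSigmaSubtype fun y u => u ^ 2 = g y),
    Fintype.card_sigma, Nat.cast_sum]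
  simp only [hfiber, sum_add_distrib, sum_const, card_univ, nsmul_one, add_comm]

theorem natCard_conic {a b c d e f : F} (ha : a ≠ 0)
    (hΔ : 4 * a * c * f + b * d * e - a * e ^ 2 - c * d ^ 2 - f * b ^ 2 ≠ 0) :
    (Nat.card {xy : F × F //
        a * xy.1 ^ 2 + b * xy.1 * xy.2 + c * xy.2 ^ 2 + d * xy.1 + e * xy.2 + f = 0} : ℤ)
      = Fintype.card F - χ (b ^ 2 - 4 * a * c) := by
  have h2 : (2 : F) ≠ 0 := Ring.two_ne_zero hF
  set D := b ^ 2 - 4 * a * c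
  set B := 2 * b * d - 4 * a * e
  set C := d ^ 2 - 4 * a * f
  have hdisc : B ^ 2 - 4 * D * C ≠ 0 := by
    rw [show B ^ 2 - 4 * D * C = -(2 ^ 4 * a) *
      (4 * a * c * f + b * d * e - a * e ^ 2 - c * d ^ 2 - f * b ^ 2) by ring]
    exact mul_ne_zero (neg_ne_zero.mpr (mul_ne_zero (pow_ne_zero 4 h2) ha)) hΔ
  let g (y : F) : F := D * y ^ 2 + B * y + C
  have hsq (x y : F) : (2 * a * x + (b * y + d)) ^ 2 - g y =
      2 ^ 2 * a * (a * x ^ 2 + b * x * y + c * y ^ 2 + d * x + e * y + f) := by ring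
  let E : F × F ≃ F × F := (Equiv.prodComm F F).trans <| Equiv.prodShear (Equiv.refl F) fun y =>
    (Equiv.mulLeft₀ (2 * a) (mul_ne_zero h2 ha)).trans (Equiv.addRight (b * y + d))
  have hE (xy : F × F) :
      a * xy.1 ^ 2 + b * xy.1 * xy.2 + c * xy.2 ^ 2 + d * xy.1 + e * xy.2 + f = 0 ↔
        (E xy).2 ^ 2 = g (E xy).1 := by
    change _ ↔ (2 * a * xy.1 + (b * xy.2 + d)) ^ 2 = g xy.2
    rw [← sub_eq_zero (a := (_ : F) ^ 2), hsq, mul_eq_zero,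
      or_iff_right (mul_ne_zero (pow_ne_zero 2 h2) ha)]
  rw [Nat.card_congr (E.subtypeEquiv (q := fun yu => yu.2 ^ 2 = g yu.1) hE),
    natCard_sq_eq_apply hF g, quadraticChar_sum_quadratic hF hdisc, sub_eq_add_neg]

end QuadraticCharSums

/-- The number of solutions `(x,y) ∈ (ℤ/pℤ)²` of
`a x² + b x y + c y² + d x + e y + f ≡ 0 (mod p)` is `p − χ(b²−4ac)`,
where `χ` is the Legendre symbol mod `p`, provided `p ∤ a` and `p ∤ 8Δ`. -/
theorem count_solutions_mod_prime
    (p : ℕ) [Fact p.Prime] (hp : Odd p)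
    (a b c d e f : ℤ)
    (ha : ¬ (p : ℤ) ∣ a)
    (hΔ : ¬ (p : ℤ) ∣ (8*a*c*f + 2*b*d*e - 2*a*e^2 - 2*c*d^2 - 2*f*b^2)) :
    (Nat.card {xy : ZMod p × ZMod p //
        (a : ZMod p)*xy.1^2 + b*xy.1*xy.2 + c*xy.2^2 + d*xy.1 + e*xy.2 + f = 0} : ℤ)
      = p - legendreSym p (b^2 - 4*a*c) := by
  have hchar : ringChar (ZMod p) ≠ 2 := by
    rw [ZMod.ringChar_zmod_n]
    rintro rfl
    exact Nat.not_even_iff_odd.mpr hp even_two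
  have hΔ' : (4 * a * c * f + b * d * e - a * e ^ 2 - c * d ^ 2 - f * b ^ 2 : ZMod p) ≠ 0 := by
    intro h
    apply hΔ
    rw [← ZMod.intCast_zmod_eq_zero_iff_dvd]
    push_cast
    linear_combination 2 * h
  rw [natCard_conic hchar (by rwa [Ne, ZMod.intCast_zmod_eq_zero_iff_dvd]) hΔ', ZMod.card]
  unfold legendreSym
  push_cast
  rfl
end

section
/- Let p be an odd prime, n ∈ ℕ, and suppose p ∤ a·(8Δ) where Δ is the determinant of the matrix associated to q(x,y) = ax²+bxy+cy²+dx+ey+f. Suppose q(α,β) ≡ 0 (mod pⁿ) — interpreting α, β as p-adic integers with q(α,β) = 0 in ℤ_p. For 0 ≤ s ≤ n define x̃(t/p^s) = α − (t/p^s)·M(t/p^s) and ỹ(t/p^s) = β − M(t/p^s) with M(u) = (Au+B)/(au²+bu+c), A = q_x(α,β), B = q_y(α,β). If (x̃(t₁/p^{s₁}), ỹ(t₁/p^{s₁})) ≡ (x̃(t₂/p^{s₂}), ỹ(t₂/p^{s₂})) (mod pⁿ) where aᵗᵢ² + btᵢp^{sᵢ} + cp^{2sᵢ} ≢ 0 (mod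 p) and 1 ≤ tᵢ ≤ p^{n−sᵢ} with p ∤ tᵢ when sᵢ > 0, then t₂p^{s₁} ≡ t₁p^{s₂} (mod pⁿ), and hence s₁ = s₂ and t₁ = t₂. -/
/-!
Write `vᵢ = (tᵢ, p^{sᵢ})` for the direction of the line through `(α, β)` that cuts out the
`i`-th point, so that this point is `(α, β) - mᵢ vᵢ` and `mᵢ Q(vᵢ) = ℓ(vᵢ)`, where
`Q(x, y) = a x² + b x y + c y²` and `ℓ = (A, B)` is the gradient of `q` at `(α, β)`.
From `m₁ v₁ ≡ m₂ v₂ (mod pⁿ)` one gets `pⁿ ∣ κ X` for `X = det(v₂, v₁)` and each of the four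
coefficients `κ = m₁, m₂, t₁ B, p^{s₂} A`. Since `p ∤ Δ`, the prime `p` does not divide both `A`
and `B`, and this forces one of the four coefficients to be prime to `p`, whence `pⁿ ∣ X`.
The normalisation of `(tᵢ, sᵢ)` then makes `X ≡ 0 (mod pⁿ)` possible only for equal parameters.
-/

theorem dvd_conic_disc_of_dvd_gradient {R : Type*} [CommRing R] {a b c d e f α β π : R}
    (hq : a*α^2 + b*α*β + c*β^2 + d*α + e*β + f = 0)
    (hA : π ∣ 2*a*α + b*β + d) (hB : π ∣ b*α + 2*c*β + e) :
    π ∣ 8*a*c*f + 2*b*d*e - 2*a*e^2 - 2*c*d^2 - 2*f*b^2 := by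
  have hdisc : 8*a*c*f + 2*b*d*e - 2*a*e^2 - 2*c*d^2 - 2*f*b^2
      = (2*a*α + b*β + d) * (b*e - 2*c*d - α*(4*a*c - b^2))
        + (b*α + 2*c*β + e) * (b*d - 2*a*e - β*(4*a*c - b^2)) := by
    linear_combination (2*(4*a*c - b^2)) * hq
  rw [hdisc]
  exact dvd_add (dvd_mul_of_dvd_left hA _) (dvd_mul_of_dvd_left hB _)

section CrossProduct

variable {R : Type*} [CommRing R] {N m₁ m₂ x₁ x₂ y₁ y₂ : R}

theorem dvd_mul_cross_left (hx : N ∣ x₂*m₂ - x₁*m₁) (hy : N ∣ y₂*m₂ - y₁*m₁) :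
    N ∣ m₁ * (x₂*y₁ - x₁*y₂) := by
  convert dvd_sub (dvd_mul_of_dvd_right hx y₂) (dvd_mul_of_dvd_right hy x₂) using 1
  ring

theorem dvd_mul_cross_right (hx : N ∣ x₂*m₂ - x₁*m₁) (hy : N ∣ y₂*m₂ - y₁*m₁) :
    N ∣ m₂ * (x₂*y₁ - x₁*y₂) := by
  convert dvd_sub (dvd_mul_of_dvd_right hx y₁) (dvd_mul_of_dvd_right hy x₁) using 1
  ring

variable {a b c A B : R}

-- With `Q` the quadratic form, `x₂² Q(v₁) - x₁² Q(v₂)` and `y₁² Q(v₂) - y₂² Q(v₁)` are multiples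
-- of the cross product `x₂ y₁ - x₁ y₂`.
theorem dvd_mul_cross_of_quadratic_fst (hm₁ : m₁ * (a*x₁^2 + b*x₁*y₁ + c*y₁^2) = A*x₁ + B*y₁)
    (hm₂ : m₂ * (a*x₂^2 + b*x₂*y₂ + c*y₂^2) = A*x₂ + B*y₂)
    (hx : N ∣ x₂*m₂ - x₁*m₁) (hy : N ∣ y₂*m₂ - y₁*m₁) :
    N ∣ x₁ * B * (x₂*y₁ - x₁*y₂) := by
  have hid : x₁ * B * (x₂*y₁ - x₁*y₂)
      = (b*x₁*x₂ + c*(x₂*y₁ + x₁*y₂)) * (m₂ * (x₂*y₁ - x₁*y₂))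
        - x₂ * (a*x₁^2 + b*x₁*y₁ + c*y₁^2) * (x₂*m₂ - x₁*m₁) := by
    linear_combination x₁^2 * hm₂ - x₁*x₂ * hm₁
  rw [hid]
  exact dvd_sub (dvd_mul_of_dvd_right (dvd_mul_cross_right hx hy) _) (dvd_mul_of_dvd_right hx _)

theorem dvd_mul_cross_of_quadratic_snd (hm₁ : m₁ * (a*x₁^2 + b*x₁*y₁ + c*y₁^2) = A*x₁ + B*y₁)
    (hm₂ : m₂ * (a*x₂^2 + b*x₂*y₂ + c*y₂^2) = A*x₂ + B*y₂)
    (hx : N ∣ x₂*m₂ - x₁*m₁) (hy : N ∣ y₂*m₂ - y₁*m₁) :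
    N ∣ y₂ * A * (x₂*y₁ - x₁*y₂) := by
  have hid : y₂ * A * (x₂*y₁ - x₁*y₂)
      = (a*(x₁*y₂ + x₂*y₁) + b*y₁*y₂) * (m₁ * (x₂*y₁ - x₁*y₂))
        + y₁ * (a*x₂^2 + b*x₂*y₂ + c*y₂^2) * (y₂*m₂ - y₁*m₁) := by
    linear_combination y₂^2 * hm₁ - y₁*y₂ * hm₂
  rw [hid]
  exact dvd_add (dvd_mul_of_dvd_right (dvd_mul_cross_left hx hy) _) (dvd_mul_of_dvd_right hy _)

end CrossProduct

section PrimeDirection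

variable {R : Type*} [CommRing R] {π A B x₁ x₂ : R} {s₁ s₂ : ℕ}

theorem dvd_mul_of_dvd_add_mul_pow {x : R} {s : ℕ} (hs : 0 < s) (h : π ∣ A*x + B*π^s) :
    π ∣ A*x :=
  (dvd_add_left (dvd_mul_of_dvd_right (dvd_pow_self π hs.ne') B)).mp h

theorem Prime.not_dvd_mul_or_not_dvd_pow_mul [IsDomain R] (hπ : Prime π) (hAB : ¬(π ∣ A ∧ π ∣ B))
    (hx₁ : 0 < s₁ → ¬π ∣ x₁) (hx₂ : 0 < s₂ → ¬π ∣ x₂)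
    (h₁ : π ∣ A*x₁ + B*π^s₁) (h₂ : π ∣ A*x₂ + B*π^s₂) :
    ¬π ∣ x₁ * B ∨ ¬π ∣ π^s₂ * A := by
  rcases s₁.eq_zero_or_pos with rfl | hs₁
  · have hA : ¬π ∣ A := fun hA ↦
      hAB ⟨hA, by simpa using (dvd_add_right (dvd_mul_of_dvd_left hA x₁)).mp h₁⟩
    right
    rcases s₂.eq_zero_or_pos with rfl | hs₂
    · simpa using hA
    · exact absurd ((hπ.dvd_mul.mp (dvd_mul_of_dvd_add_mul_pow hs₂ h₂)).resolve_right
        (hx₂ hs₂)) hA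
  · have hA : π ∣ A :=
      (hπ.dvd_mul.mp (dvd_mul_of_dvd_add_mul_pow hs₁ h₁)).resolve_right (hx₁ hs₁)
    left
    intro h
    exact (hπ.dvd_mul.mp h).elim (hx₁ hs₁) fun hB ↦ hAB ⟨hA, hB⟩

theorem Prime.pow_dvd_cross_of_dvd_sub [IsDomain R] {a b c m₁ m₂ : R} {n : ℕ} (hπ : Prime π)
    (hAB : ¬(π ∣ A ∧ π ∣ B)) (hx₁ : 0 < s₁ → ¬π ∣ x₁) (hx₂ : 0 < s₂ → ¬π ∣ x₂)
    (hm₁ : m₁ * (a*x₁^2 + b*x₁*π^s₁ + c*(π^s₁)^2) = A*x₁ + B*π^s₁)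
    (hm₂ : m₂ * (a*x₂^2 + b*x₂*π^s₂ + c*(π^s₂)^2) = A*x₂ + B*π^s₂)
    (hx : π^n ∣ x₂*m₂ - x₁*m₁) (hy : π^n ∣ π^s₂*m₂ - π^s₁*m₁) :
    π^n ∣ x₂*π^s₁ - x₁*π^s₂ := by
  by_cases h₁ : π ∣ m₁
  swap
  · exact hπ.pow_dvd_of_dvd_mul_left n h₁ (dvd_mul_cross_left hx hy)
  by_cases h₂ : π ∣ m₂
  swap
  · exact hπ.pow_dvd_of_dvd_mul_left n h₂ (dvd_mul_cross_right hx hy)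
  rcases hπ.not_dvd_mul_or_not_dvd_pow_mul hAB hx₁ hx₂ (hm₁ ▸ dvd_mul_of_dvd_left h₁ _)
      (hm₂ ▸ dvd_mul_of_dvd_left h₂ _) with hB | hA
  · exact hπ.pow_dvd_of_dvd_mul_left n hB (dvd_mul_cross_of_quadratic_fst hm₁ hm₂ hx hy)
  · exact hπ.pow_dvd_of_dvd_mul_left n hA (dvd_mul_cross_of_quadratic_snd hm₁ hm₂ hx hy)

end PrimeDirection

theorem not_pow_dvd_sub_mul_pow {R : Type*} [CommRing R] [IsDomain R] {p r r' : R}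
    {n s s' : ℕ} (hp : p ≠ 0) (hss' : s < s') (hs' : s' ≤ n) (hr : ¬p ∣ r) :
    ¬p^n ∣ r*p^s - r'*p^s' := by
  intro h
  have h₁ : p^(s+1) ∣ r*p^s - r'*p^s' := (pow_dvd_pow p (by omega)).trans h
  have h₂ : p^(s+1) ∣ r*p^s :=
    (dvd_sub_left (dvd_mul_of_dvd_right (pow_dvd_pow p hss') r')).mp h₁
  rw [pow_succ, mul_comm r] at h₂
  exact hr ((mul_dvd_mul_iff_left (pow_ne_zero s hp)).mp h₂)

theorem Int.eq_of_pow_dvd_sub_mul_pow {p t₁ t₂ : ℤ} {n s₁ s₂ : ℕ} (hp : p ≠ 0)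
    (hs₁ : s₁ ≤ n) (hs₂ : s₂ ≤ n)
    (ht₁ : 1 ≤ t₁ ∧ t₁ ≤ p^(n - s₁)) (ht₂ : 1 ≤ t₂ ∧ t₂ ≤ p^(n - s₂))
    (ht₁' : 0 < s₁ → ¬p ∣ t₁) (ht₂' : 0 < s₂ → ¬p ∣ t₂)
    (h : p^n ∣ t₂*p^s₁ - t₁*p^s₂) :
    s₁ = s₂ ∧ t₁ = t₂ := by
  obtain rfl : s₁ = s₂ := by
    rcases lt_trichotomy s₁ s₂ with hlt | heq | hgt
    · exact absurd h (not_pow_dvd_sub_mul_pow hp hlt hs₂ (ht₂' (by omega)))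
    · exact heq
    · exact absurd (dvd_sub_comm.mp h) (not_pow_dvd_sub_mul_pow hp hgt hs₁ (ht₁' (by omega)))
  refine ⟨rfl, ?_⟩
  have hdvd : p^(n - s₁) ∣ t₂ - t₁ := by
    refine (mul_dvd_mul_iff_left (pow_ne_zero s₁ hp)).mp ?_
    rw [← pow_add, Nat.add_sub_cancel' hs₁, mul_sub, mul_comm _ t₂, mul_comm _ t₁]
    exact h
  have := Int.eq_zero_of_abs_lt_dvd hdvd (abs_lt.mpr ⟨by linarith, by linarith⟩)
  omega

theorem parametrization_injective_general
    (p : ℕ) [Fact p.Prime] (n : ℕ)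
    (a b c d e f : ℤ)
    (hΔ : ¬ (p : ℤ) ∣ (8*a*c*f + 2*b*d*e - 2*a*e^2 - 2*c*d^2 - 2*f*b^2))
    (α β : ℤ_[p])
    (hq : (a : ℤ_[p])*α^2 + b*α*β + c*β^2 + d*α + e*β + f = 0)
    (A B : ℤ_[p]) (hA : A = 2*a*α + b*β + d) (hB : B = b*α + 2*c*β + e)
    (s₁ s₂ : ℕ) (hs₁ : s₁ ≤ n) (hs₂ : s₂ ≤ n)
    (t₁ t₂ : ℤ)
    (ht₁ : 1 ≤ t₁ ∧ t₁ ≤ (p : ℤ)^(n - s₁)) (ht₂ : 1 ≤ t₂ ∧ t₂ ≤ (p : ℤ)^(n - s₂))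
    (ht₁' : 0 < s₁ → ¬ (p : ℤ) ∣ t₁) (ht₂' : 0 < s₂ → ¬ (p : ℤ) ∣ t₂)
    (m₁ m₂ : ℤ_[p])
    (hm₁ : m₁ * ((a : ℤ_[p])*(t₁:ℤ_[p])^2 + b*t₁*(p:ℤ_[p])^s₁ + c*(p:ℤ_[p])^(2*s₁))
           = A*(t₁:ℤ_[p]) + B*(p:ℤ_[p])^s₁)
    (hm₂ : m₂ * ((a : ℤ_[p])*(t₂:ℤ_[p])^2 + b*t₂*(p:ℤ_[p])^s₂ + c*(p:ℤ_[p])^(2*s₂))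
           = A*(t₂:ℤ_[p]) + B*(p:ℤ_[p])^s₂)
    (hx : (p : ℤ_[p])^n ∣ ((α - (t₁:ℤ_[p])*m₁) - (α - (t₂:ℤ_[p])*m₂)))
    (hy : (p : ℤ_[p])^n ∣ ((β - (p:ℤ_[p])^s₁*m₁) - (β - (p:ℤ_[p])^s₂*m₂))) :
    (p : ℤ)^n ∣ (t₂*(p:ℤ)^s₁ - t₁*(p:ℤ)^s₂) ∧ s₁ = s₂ ∧ t₁ = t₂ := by
  have hp : Prime (p : ℤ_[p]) := PadicInt.prime_p
  have hdvd_int (k : ℤ) : (p : ℤ_[p]) ∣ k ↔ (p : ℤ) ∣ k := by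
    simpa using PadicInt.pow_p_dvd_int_iff 1 k
  have hAB : ¬((p : ℤ_[p]) ∣ A ∧ (p : ℤ_[p]) ∣ B) := by
    rintro ⟨hpA, hpB⟩
    subst hA hB
    exact hΔ ((hdvd_int _).mp (by push_cast; exact dvd_conic_disc_of_dvd_gradient hq hpA hpB))
  have hX : (p : ℤ)^n ∣ t₂*(p:ℤ)^s₁ - t₁*(p:ℤ)^s₂ := by
    rw [← PadicInt.pow_p_dvd_int_iff]
    push_cast
    rw [pow_mul'] at hm₁ hm₂
    rw [sub_sub_sub_cancel_left] at hx hy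
    exact hp.pow_dvd_cross_of_dvd_sub hAB (fun hs ht ↦ ht₁' hs ((hdvd_int t₁).mp ht))
      (fun hs ht ↦ ht₂' hs ((hdvd_int t₂).mp ht)) hm₁ hm₂ hx hy
  exact ⟨hX, Int.eq_of_pow_dvd_sub_mul_pow (by exact_mod_cast (Fact.out : p.Prime).ne_zero)
    hs₁ hs₂ ht₁ ht₂ ht₁' ht₂' hX⟩

/-- Distinctness in the parametrization of solutions of `q(x,y) ≡ 0 mod pⁿ`:
if two parameters `t₁/p^{s₁}` and `t₂/p^{s₂}` give points agreeing mod `pⁿ`,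
then `t₂ p^{s₁} ≡ t₁ p^{s₂} (mod pⁿ)`, whence `s₁ = s₂` and `t₁ = t₂`. -/
theorem parametrization_injective
    (p : ℕ) [Fact p.Prime] (hodd : Odd p) (n : ℕ)
    (a b c d e f : ℤ)
    (ha : ¬ (p : ℤ) ∣ a)
    (hΔ : ¬ (p : ℤ) ∣ (8*a*c*f + 2*b*d*e - 2*a*e^2 - 2*c*d^2 - 2*f*b^2))
    (α β : ℤ_[p])
    (hq : (a : ℤ_[p])*α^2 + b*α*β + c*β^2 + d*α + e*β + f = 0)
    (A B : ℤ_[p]) (hA : A = 2*a*α + b*β + d) (hB : B = b*α + 2*c*β + e)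
    (s₁ s₂ : ℕ) (hs₁ : s₁ ≤ n) (hs₂ : s₂ ≤ n)
    (t₁ t₂ : ℤ)
    (ht₁ : 1 ≤ t₁ ∧ t₁ ≤ (p : ℤ)^(n - s₁)) (ht₂ : 1 ≤ t₂ ∧ t₂ ≤ (p : ℤ)^(n - s₂))
    (ht₁' : 0 < s₁ → ¬ (p : ℤ) ∣ t₁) (ht₂' : 0 < s₂ → ¬ (p : ℤ) ∣ t₂)
    (hden₁ : ¬ (p : ℤ_[p]) ∣ ((a : ℤ_[p])*(t₁:ℤ_[p])^2 + b*t₁*(p:ℤ_[p])^s₁ + c*(p:ℤ_[p])^(2*s₁)))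
    (hden₂ : ¬ (p : ℤ_[p]) ∣ ((a : ℤ_[p])*(t₂:ℤ_[p])^2 + b*t₂*(p:ℤ_[p])^s₂ + c*(p:ℤ_[p])^(2*s₂)))
    (m₁ m₂ : ℤ_[p])
    (hm₁ : m₁ * ((a : ℤ_[p])*(t₁:ℤ_[p])^2 + b*t₁*(p:ℤ_[p])^s₁ + c*(p:ℤ_[p])^(2*s₁))
           = A*(t₁:ℤ_[p]) + B*(p:ℤ_[p])^s₁)
    (hm₂ : m₂ * ((a : ℤ_[p])*(t₂:ℤ_[p])^2 + b*t₂*(p:ℤ_[p])^s₂ + c*(p:ℤ_[p])^(2*s₂))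
           = A*(t₂:ℤ_[p]) + B*(p:ℤ_[p])^s₂)
    (hx : (p : ℤ_[p])^n ∣ ((α - (t₁:ℤ_[p])*m₁) - (α - (t₂:ℤ_[p])*m₂)))
    (hy : (p : ℤ_[p])^n ∣ ((β - (p:ℤ_[p])^s₁*m₁) - (β - (p:ℤ_[p])^s₂*m₂))) :
    (p : ℤ)^n ∣ (t₂*(p:ℤ)^s₁ - t₁*(p:ℤ)^s₂) ∧ s₁ = s₂ ∧ t₁ = t₂ :=
  parametrization_injective_general p n a b c d e f hΔ α β hq A B hA hB s₁ s₂ hs₁ hs₂ t₁ t₂ ht₁ ht₂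
    ht₁' ht₂' m₁ m₂ hm₁ hm₂ hx hy
end

section
/- Let Q'(l₁,l₂,l₃) = Ml₁² + Nl₁l₂ + Ol₂² + Pl₁l₃ + Ql₂l₃ + Rl₃² where M = 16aΔ + (be−2cd)², N = −16bΔ + 2(be−2cd)(bd−2ae), O = 16cΔ + (bd−2ae)², P = 2(4ac−b²)(2cd−be), Q = 2(4ac−b²)(2ae−bd), R = (4ac−b²)², and 4Δ = 4acf − ae² − b²f + bde − cd². Then the determinant of the symmetric matrix associated to Q' equals 64Δ²(4ac−b²)³. In particular, if Δ ≠ 0 and 4ac − b² ≠ 0, then Q' is a non-singular quadratic form. -/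
/-!
Writing `D = 4ac − b²`, the matrix of `Q'` splits as `Δ • B + v vᵀ`, where `B` is the matrix of the
binary form `16(ax² − bxy + cy²)` padded by a zero row and column, and
`v = (be − 2cd, bd − 2ae, −D)` is four times the last column of the adjugate of the matrix of
`ax² + bxy + cy² + dxz + eyz + fz²`, up to the sign of its last entry. Since `B` has vanishing last
row and column, `det (Δ • B + v vᵀ) = Δ² · det B₂ · v₃²` with `det B₂ = 64 D` and `v₃² = D²`.
-/

open Matrix

theorem det_smul_pad_add_vecMulVec {R : Type*} [CommRing R] (t p q r : R) (v : Fin 3 → R) :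
    (t • !![p, q, 0; q, r, 0; 0, 0, 0] + vecMulVec v v).det =
      t ^ 2 * (p * r - q ^ 2) * v 2 ^ 2 := by
  simp [det_fin_three, vecMulVec_apply]
  ring

theorem dual_form_matrix_eq_smul_add_vecMulVec {K : Type*} [Field K] [CharZero K]
    (a b c d e Δ M N O P Q R : K)
    (hM : M = 16*a*Δ + (b*e - 2*c*d)^2)
    (hN : N = -16*b*Δ + 2*(b*e - 2*c*d)*(b*d - 2*a*e))
    (hO : O = 16*c*Δ + (b*d - 2*a*e)^2)
    (hP : P = 2*(4*a*c - b^2)*(2*c*d - b*e))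
    (hQ : Q = 2*(4*a*c - b^2)*(2*a*e - b*d))
    (hR : R = (4*a*c - b^2)^2) :
    !![M, N/2, P/2; N/2, O, Q/2; P/2, Q/2, R] =
      Δ • !![16*a, -8*b, 0; -8*b, 16*c, 0; 0, 0, 0] +
        vecMulVec ![b*e - 2*c*d, b*d - 2*a*e, -(4*a*c - b^2)]
          ![b*e - 2*c*d, b*d - 2*a*e, -(4*a*c - b^2)] := by
  subst hM hN hO hP hQ hR
  ext i j
  fin_cases i <;> fin_cases j <;> simp <;> ring

theorem dual_form_determinant_general
    (a b c d e Δ : ℚ)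
    (M N O P Q R : ℚ)
    (hM : M = 16*a*Δ + (b*e - 2*c*d)^2)
    (hN : N = -16*b*Δ + 2*(b*e - 2*c*d)*(b*d - 2*a*e))
    (hO : O = 16*c*Δ + (b*d - 2*a*e)^2)
    (hP : P = 2*(4*a*c - b^2)*(2*c*d - b*e))
    (hQ : Q = 2*(4*a*c - b^2)*(2*a*e - b*d))
    (hR : R = (4*a*c - b^2)^2) :
    (Matrix.det !![M, N/2, P/2; N/2, O, Q/2; P/2, Q/2, R]
        = 64*Δ^2*(4*a*c - b^2)^3) ∧
    (Δ ≠ 0 → 4*a*c - b^2 ≠ 0 →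
      Matrix.det !![M, N/2, P/2; N/2, O, Q/2; P/2, Q/2, R] ≠ 0) := by
  have hdet : Matrix.det !![M, N/2, P/2; N/2, O, Q/2; P/2, Q/2, R]
      = 64*Δ^2*(4*a*c - b^2)^3 := by
    rw [dual_form_matrix_eq_smul_add_vecMulVec a b c d e Δ M N O P Q R hM hN hO hP hQ hR,
      det_smul_pad_add_vecMulVec]
    simp only [cons_val_two, tail_cons, head_cons]
    ring
  refine ⟨hdet, fun hΔ hD => ?_⟩
  rw [hdet]
  positivity

/-- The determinant of the symmetric matrix associated to the dual form `Q'`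
equals `64Δ²(4ac−b²)³`; in particular `Q'` is non-singular when `Δ ≠ 0` and
`4ac − b² ≠ 0`. -/
theorem dual_form_determinant
    (a b c d e f Δ : ℚ) (hΔ : Δ = (4*a*c*f - a*e^2 - b^2*f + b*d*e - c*d^2)/4)
    (M N O P Q R : ℚ)
    (hM : M = 16*a*Δ + (b*e - 2*c*d)^2)
    (hN : N = -16*b*Δ + 2*(b*e - 2*c*d)*(b*d - 2*a*e))
    (hO : O = 16*c*Δ + (b*d - 2*a*e)^2)
    (hP : P = 2*(4*a*c - b^2)*(2*c*d - b*e))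
    (hQ : Q = 2*(4*a*c - b^2)*(2*a*e - b*d))
    (hR : R = (4*a*c - b^2)^2) :
    (Matrix.det !![M, N/2, P/2; N/2, O, Q/2; P/2, Q/2, R]
        = 64*Δ^2*(4*a*c - b^2)^3) ∧
    (Δ ≠ 0 → 4*a*c - b^2 ≠ 0 →
      Matrix.det !![M, N/2, P/2; N/2, O, Q/2; P/2, Q/2, R] ≠ 0) :=
  dual_form_determinant_general a b c d e Δ M N O P Q R hM hN hO hP hQ hR
end

section
/- Let p be an odd prime, n ≥ 1, and suppose p ∤ a, p ∤ (4ac − b²), and p ∤ 8Δ where Δ is the determinant of the matrix of Q(x,y,z) = ax²+bxy+cy²+dxz+eyz+fz². Then the number of triples (x,y,z) ∈ (ℤ/pⁿℤ)³ with Q(x,y,z) ≡ 0 (mod pⁿ) and gcd(z,p) = 1 equals p^{2n−2}(p−1)(p − χ(b²−4ac)), where χ is the Legendre symbol mod p. -/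
/-!
Since `z` is a unit, `(x, y, z) ↦ (z, x / z, y / z)` identifies the solutions with pairs of a
unit and a zero of the dehomogenised form `q(u, v) = Q(u, v, 1)`. Completing the square, which
only needs `2a` and `2(4ac - b²)` to be units, turns `q = 0` into the diagonal conic
`4(4ac - b²) X² + Y² = M` with `M` a unit. Over `𝔽_p` a conic `αX² + βY² = m` with `αβm ≠ 0`
has `p - χ(-αβ)` points, by a Jacobi sum. Modulo `pⁿ` one coordinate of every point is a unit,
so Newton's method lifts each point to exactly `p` points modulo `pⁿ⁺¹`.
-/

theorem Nat.card_eq_card_mul_of_card_fiber_eq {α β : Type*} [Finite α] [Finite β] (g : α → β)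
    {k : ℕ} (h : ∀ b, Nat.card {a // g a = b} = k) : Nat.card α = Nat.card β * k := by
  have := Fintype.ofFinite β
  rw [← Nat.card_congr (Equiv.sigmaFiberEquiv g), Nat.card_sigma]
  simp [h, mul_comm]

def diagonalConic {R : Type*} [CommRing R] (A B M : R) : Set (R × R) :=
  {w | A * w.1 ^ 2 + B * w.2 ^ 2 = M}

namespace RingHom

variable {R S : Type*} [CommRing R] [CommRing S] {f : R →+* S}

theorem mul_eq_zero_of_ker_sq_eq_bot (hf : RingHom.ker f ^ 2 = ⊥) {x y : R}
    (hx : f x = 0) (hy : f y = 0) : x * y = 0 := by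
  have : x * y ∈ RingHom.ker f ^ 2 := sq (RingHom.ker f) ▸ Ideal.mul_mem_mul hx hy
  simpa [hf] using this

/-- Newton's method: over a square-zero thickening a simple root of `β t² + γ` lifts uniquely. -/
theorem existsUnique_root_of_ker_sq_eq_bot (hf : RingHom.ker f ^ 2 = ⊥) {β γ t₀ : R}
    (hu : IsUnit (2 * β * t₀)) (ht₀ : f (β * t₀ ^ 2 + γ) = 0) :
    ∃! t, f t = f t₀ ∧ β * t ^ 2 + γ = 0 := by
  obtain ⟨u, hu⟩ := hu
  have key : ∀ t, f t = f t₀ → β * t ^ 2 + γ = (β * t₀ ^ 2 + γ) + u * (t - t₀) := by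
    intro t ht
    have hsq : (t - t₀) * (t - t₀) = 0 :=
      mul_eq_zero_of_ker_sq_eq_bot hf (by simp [ht]) (by simp [ht])
    rw [hu]; linear_combination β * hsq
  have hlift : f (t₀ - ↑u⁻¹ * (β * t₀ ^ 2 + γ)) = f t₀ := by simp [ht₀]
  refine ⟨t₀ - ↑u⁻¹ * (β * t₀ ^ 2 + γ), ⟨hlift, ?_⟩, ?_⟩
  · rw [key _ hlift]; simp
  · rintro t ⟨ht, hroot⟩
    rw [key t ht] at hroot
    calc t = t₀ + ↑u⁻¹ * (u * (t - t₀)) := by simp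
      _ = _ := by rw [eq_neg_of_add_eq_zero_right hroot]; ring

theorem card_fiber_eq_card_ker (hsurj : Function.Surjective f) (s : S) :
    Nat.card {x // f x = s} = Nat.card (RingHom.ker f) :=
  Nat.card_congr (AddMonoidHom.fiberEquivKerOfSurjective (f := f.toAddMonoidHom) hsurj s)

theorem card_eq_card_mul_card_ker [_root_.Finite R] (hsurj : Function.Surjective f) :
    Nat.card R = Nat.card S * Nat.card (RingHom.ker f) := by
  have := _root_.Finite.of_surjective f hsurj
  exact Nat.card_eq_card_mul_of_card_fiber_eq f (card_fiber_eq_card_ker hsurj)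

end RingHom

namespace diagonalConic

variable {R S : Type*} [CommRing R] [CommRing S] {f : R →+* S} {A B M : R}

@[simp]
theorem mem_iff {w : R × R} : w ∈ diagonalConic A B M ↔ A * w.1 ^ 2 + B * w.2 ^ 2 = M :=
  Iff.rfl

theorem map_mem {w : R × R} (hw : w ∈ diagonalConic A B M) :
    Prod.map f f w ∈ diagonalConic (f A) (f B) (f M) := by
  simpa using congrArg f hw

theorem card_lifts_eq_card_fiber_fst (hf : RingHom.ker f ^ 2 = ⊥) (h2B : IsUnit (2 * B))
    {x₀ : S} {y₀ : R} (hw₀ : (x₀, f y₀) ∈ diagonalConic (f A) (f B) (f M)) (hy₀ : IsUnit y₀) :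
    Nat.card {w // w ∈ diagonalConic A B M ∧ f w.1 = x₀ ∧ f w.2 = f y₀} =
      Nat.card {x // f x = x₀} := by
  have hroot : ∀ x, f x = x₀ → ∃! y, f y = f y₀ ∧ B * y ^ 2 + (A * x ^ 2 - M) = 0 := by
    intro x hx
    refine RingHom.existsUnique_root_of_ker_sq_eq_bot hf (h2B.mul hy₀) ?_
    simp only [mem_iff] at hw₀
    simp only [map_add, map_sub, map_mul, map_pow, hx]
    linear_combination hw₀
  refine Nat.card_eq_of_bijective (fun w => ⟨w.1.1, w.2.2.1⟩) ⟨?_, ?_⟩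
  · rintro ⟨⟨x, y⟩, hw, hx, hy⟩ ⟨⟨x', y'⟩, hw', hx', hy'⟩ h
    obtain rfl : x = x' := congrArg Subtype.val h
    obtain rfl : y = y' := (hroot x hx).unique ⟨hy, by linear_combination mem_iff.1 hw⟩
      ⟨hy', by linear_combination mem_iff.1 hw'⟩
    rfl
  · rintro ⟨x, hx⟩
    obtain ⟨y, ⟨hy, hxy⟩, -⟩ := hroot x hx
    exact ⟨⟨(x, y), mem_iff.2 (by linear_combination hxy), hx, hy⟩, rfl⟩

theorem card_lifts_swap {x₀ y₀ : S} :
    Nat.card {w // w ∈ diagonalConic A B M ∧ f w.1 = x₀ ∧ f w.2 = y₀} =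
      Nat.card {w // w ∈ diagonalConic B A M ∧ f w.1 = y₀ ∧ f w.2 = x₀} :=
  Nat.card_congr <| (Equiv.prodComm R R).subtypeEquiv fun w => by
    simp only [mem_iff, Equiv.prodComm_apply, Prod.fst_swap, Prod.snd_swap, add_comm (A * _),
      and_comm (a := f w.1 = x₀)]

theorem card_eq_card_mul_card_ker [Finite R] [IsLocalRing R] [IsLocalRing S]
    (hsurj : Function.Surjective f) (hf : RingHom.ker f ^ 2 = ⊥) (h2 : IsUnit (2 : R))
    (hA : IsUnit A) (hB : IsUnit B) (hM : IsUnit M) :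
    Nat.card (diagonalConic A B M) =
      Nat.card (diagonalConic (f A) (f B) (f M)) * Nat.card (RingHom.ker f) := by
  have := Finite.of_surjective f hsurj
  have := IsLocalHom.of_surjective f hsurj
  let g : diagonalConic A B M → diagonalConic (f A) (f B) (f M) :=
    Set.MapsTo.restrict (Prod.map f f) _ _ fun _ => map_mem
  refine Nat.card_eq_card_mul_of_card_fiber_eq g fun ⟨(x₀, y₀), hw₀⟩ => ?_
  have hfiber : Nat.card {w // g w = ⟨(x₀, y₀), hw₀⟩} =
      Nat.card {w // w ∈ diagonalConic A B M ∧ f w.1 = x₀ ∧ f w.2 = y₀} :=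
    Nat.card_congr <| (Equiv.subtypeEquivRight fun w => by
      simp only [Subtype.ext_iff, Prod.ext_iff]; rfl).trans
      (Equiv.subtypeSubtypeEquivSubtypeInter _ (fun w : R × R => f w.1 = x₀ ∧ f w.2 = y₀))
  rw [hfiber]
  obtain ⟨x₁, rfl⟩ := hsurj x₀
  obtain ⟨y₁, rfl⟩ := hsurj y₀
  rcases IsLocalRing.isUnit_or_isUnit_of_isUnit_add (mem_iff.1 hw₀ ▸ hM.map f) with hx₀ | hy₀
  · have hx₁ : IsUnit x₁ :=
      (isUnit_map_iff f x₁).mp ((isUnit_pow_iff two_ne_zero).mp (isUnit_of_mul_isUnit_right hx₀))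
    have hw₀' : (f y₁, f x₁) ∈ diagonalConic (f B) (f A) (f M) := by
      simpa [add_comm] using hw₀
    rw [card_lifts_swap, card_lifts_eq_card_fiber_fst hf (h2.mul hA) hw₀' hx₁,
      RingHom.card_fiber_eq_card_ker hsurj]
  · have hy₁ : IsUnit y₁ :=
      (isUnit_map_iff f y₁).mp ((isUnit_pow_iff two_ne_zero).mp (isUnit_of_mul_isUnit_right hy₀))
    rw [card_lifts_eq_card_fiber_fst hf (h2.mul hB) hw₀ hy₁,
      RingHom.card_fiber_eq_card_ker hsurj]

end diagonalConic

section FiniteField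

variable {F : Type*} [Field F] [Fintype F] [DecidableEq F]

theorem card_mul_sq_eq (hF : ringChar F ≠ 2) {α : F} (hα : α ≠ 0) (t : F) :
    (Nat.card {x : F // α * x ^ 2 = t} : ℤ) = quadraticChar F (α * t) + 1 := by
  rw [← quadraticChar_card_sqrts hF, Set.toFinset_card, ← Nat.card_eq_fintype_card]
  norm_cast
  refine Nat.card_congr ((Equiv.mulLeft₀ α hα).subtypeEquiv fun x => ?_)
  simp only [Equiv.mulLeft₀_apply, Set.mem_ofPred_eq]
  rw [mul_pow, sq α, mul_assoc, mul_right_inj' hα]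

theorem sum_quadraticChar_mul_quadraticChar_sub (hF : ringChar F ≠ 2) {m : F} (hm : m ≠ 0) :
    ∑ t : F, quadraticChar F t * quadraticChar F (m - t) = -quadraticChar F (-1) := by
  rw [← Equiv.sum_comp (Equiv.mulLeft₀ m hm)]
  calc ∑ s : F, quadraticChar F (m * s) * quadraticChar F (m - m * s)
      = ∑ s : F, quadraticChar F (m ^ 2) * (quadraticChar F s * quadraticChar F (1 - s)) := by
        refine Finset.sum_congr rfl fun s _ => ?_
        rw [show m - m * s = m * (1 - s) by ring, map_mul, map_mul, map_pow]
        ring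
    _ = jacobiSum (quadraticChar F) (quadraticChar F)⁻¹ := by
        simp only [quadraticChar_sq_one' hm, one_mul, (quadraticChar_isQuadratic F).inv]
        rfl
    _ = -quadraticChar F (-1) := jacobiSum_nontrivial_inv (quadraticChar_ne_one hF)

theorem sum_quadraticChar_mul_left_eq_zero (hF : ringChar F ≠ 2) (γ : F) :
    ∑ t : F, quadraticChar F (γ * t) = 0 := by
  simp only [map_mul, ← Finset.mul_sum, quadraticChar_sum_zero hF, mul_zero]

theorem card_diagonalConic_of_field (hF : ringChar F ≠ 2) {α β m : F} (hα : α ≠ 0)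
    (hβ : β ≠ 0) (hm : m ≠ 0) :
    (Nat.card (diagonalConic α β m) : ℤ) = Fintype.card F - quadraticChar F (-(α * β)) := by
  have hsplit : diagonalConic α β m ≃
      Σ t : F, {x : F // α * x ^ 2 = t} × {y : F // β * y ^ 2 = m - t} :=
    { toFun := fun w => ⟨α * w.1.1 ^ 2, ⟨w.1.1, rfl⟩, ⟨w.1.2, eq_sub_of_add_eq' w.2⟩⟩
      invFun := fun s => ⟨(s.2.1.1, s.2.2.1), by
        rw [diagonalConic.mem_iff, s.2.1.2, s.2.2.2]; ring⟩
      left_inv := fun w => rfl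
      right_inv := fun ⟨t, ⟨x, hx⟩, ⟨y, hy⟩⟩ => by subst hx; rfl }
  have hshift : ∑ t : F, quadraticChar F (β * (m - t)) = 0 := by
    rw [← sum_quadraticChar_mul_left_eq_zero hF β]
    exact Equiv.sum_comp (Equiv.subLeft m) fun t => quadraticChar F (β * t)
  rw [Nat.card_congr hsplit, Nat.card_sigma]
  push_cast [Nat.card_prod, card_mul_sq_eq hF hα, card_mul_sq_eq hF hβ]
  calc ∑ t : F, (quadraticChar F (α * t) + 1) * (quadraticChar F (β * (m - t)) + 1)
      = quadraticChar F (α * β) * ∑ t : F, quadraticChar F t * quadraticChar F (m - t)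
          + ∑ t : F, quadraticChar F (α * t) + ∑ t : F, quadraticChar F (β * (m - t))
          + ∑ _t : F, 1 := by
        simp only [Finset.mul_sum, ← Finset.sum_add_distrib, map_mul]
        refine Finset.sum_congr rfl fun t _ => by ring
    _ = Fintype.card F - quadraticChar F (-(α * β)) := by
        rw [sum_quadraticChar_mul_quadraticChar_sub hF hm, sum_quadraticChar_mul_left_eq_zero hF,
          hshift, neg_eq_neg_one_mul (α * β), map_mul _ (-1)]
        simp only [Finset.sum_const, Finset.card_univ, nsmul_eq_mul, mul_one]
        ring

end FiniteField

theorem Nat.Prime.intCast_not_dvd_two {p : ℕ} (hp : p.Prime) (hp2 : p ≠ 2) : ¬ (p : ℤ) ∣ 2 := by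
  exact_mod_cast (Nat.prime_dvd_prime_iff_eq hp Nat.prime_two).not.2 hp2

namespace ZMod

variable {p : ℕ} [Fact p.Prime]

theorem isLocalRing_prime_pow {n : ℕ} (hn : n ≠ 0) : IsLocalRing (ZMod (p ^ n)) :=
  have : Fact (1 < p ^ n) := ⟨Nat.one_lt_pow hn (Fact.out : p.Prime).one_lt⟩
  IsLocalRing.of_surjective' (PadicInt.toZModPow n) (ZMod.ringHom_surjective _)

theorem isUnit_intCast_prime_pow {n : ℕ} (hn : n ≠ 0) {A : ℤ} (hA : ¬ (p : ℤ) ∣ A) :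
    IsUnit (A : ZMod (p ^ n)) := by
  have := isLocalRing_prime_pow (p := p) hn
  refine isUnit_of_map_unit (ZMod.castHom (dvd_pow_self p hn) (ZMod p)) _ ?_
  rw [map_intCast, isUnit_iff_ne_zero, Ne, ZMod.intCast_zmod_eq_zero_iff_dvd]
  exact hA

theorem ker_castHom_pow_succ_sq {n : ℕ} (hn : n ≠ 0) :
    RingHom.ker (ZMod.castHom (pow_dvd_pow p n.le_succ) (ZMod (p ^ n))) ^ 2 = ⊥ := by
  have hval {x : ZMod (p ^ (n + 1))}
      (hx : ZMod.castHom (pow_dvd_pow p n.le_succ) (ZMod (p ^ n)) x = 0) : p ^ n ∣ x.val := by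
    rwa [← ZMod.natCast_zmod_val x, map_natCast, ZMod.natCast_eq_zero_iff] at hx
  rw [eq_bot_iff, sq, Ideal.mul_le]
  intro x hx y hy
  replace hx := hval hx
  replace hy := hval hy
  rw [Ideal.mem_bot, ← ZMod.natCast_zmod_val x, ← ZMod.natCast_zmod_val y, ← Nat.cast_mul,
    ZMod.natCast_eq_zero_iff]
  exact (pow_dvd_pow p (by omega : n + 1 ≤ n + n)).trans (pow_add p n n ▸ mul_dvd_mul hx hy)

theorem card_ker_castHom_pow_succ_s11 (n : ℕ) :
    Nat.card (RingHom.ker (ZMod.castHom (pow_dvd_pow p n.le_succ) (ZMod (p ^ n)))) = p := by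
  have h := RingHom.card_eq_card_mul_card_ker (ZMod.castHom_surjective (pow_dvd_pow p n.le_succ))
  rw [Nat.card_zmod, Nat.card_zmod] at h
  exact (Nat.eq_of_mul_eq_mul_left (pow_pos (Fact.out : p.Prime).pos n)
    ((pow_succ p n).symm.trans h)).symm

theorem card_diagonalConic_prime_pow (hp : p ≠ 2) {A B M : ℤ} (hA : ¬ (p : ℤ) ∣ A)
    (hB : ¬ (p : ℤ) ∣ B) (hM : ¬ (p : ℤ) ∣ M) (n : ℕ) :
    (Nat.card (diagonalConic (A : ZMod (p ^ (n + 1))) B M) : ℤ) =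
      p ^ n * (p - legendreSym p (-(A * B))) := by
  induction n with
  | zero =>
    rw [zero_add, pow_one, pow_zero, one_mul]
    have hne {C : ℤ} (hC : ¬ (p : ℤ) ∣ C) : (C : ZMod p) ≠ 0 :=
      (ZMod.intCast_zmod_eq_zero_iff_dvd C p).not.2 hC
    rw [card_diagonalConic_of_field (by rwa [ZMod.ringChar_zmod_n]) (hne hA) (hne hB) (hne hM),
      ZMod.card, legendreSym]
    push_cast
    rfl
  | succ n ih =>
    have := isLocalRing_prime_pow (p := p) n.succ_ne_zero
    have := isLocalRing_prime_pow (p := p) (n + 1).succ_ne_zero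
    have hunit {C : ℤ} (hC : ¬ (p : ℤ) ∣ C) := isUnit_intCast_prime_pow (n + 1).succ_ne_zero hC
    rw [diagonalConic.card_eq_card_mul_card_ker (ZMod.castHom_surjective _)
      (ker_castHom_pow_succ_sq n.succ_ne_zero)
      (by exact_mod_cast hunit ((Fact.out : p.Prime).intCast_not_dvd_two hp)) (hunit hA)
      (hunit hB) (hunit hM), card_ker_castHom_pow_succ_s11, map_intCast, map_intCast, map_intCast]
    push_cast [ih]
    ring

end ZMod

section QuadraticInThreeVariables

variable {R : Type*} [CommRing R]

theorem card_zeros_isUnit_eq_card_units_mul (a b c d e f : R) :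
    Nat.card {v : R × R × R // a * v.1 ^ 2 + b * v.1 * v.2.1 + c * v.2.1 ^ 2
        + d * v.1 * v.2.2 + e * v.2.1 * v.2.2 + f * v.2.2 ^ 2 = 0 ∧ IsUnit v.2.2} =
      Nat.card Rˣ * Nat.card {w : R × R //
        a * w.1 ^ 2 + b * w.1 * w.2 + c * w.2 ^ 2 + d * w.1 + e * w.2 + f = 0} := by
  rw [← Nat.card_prod]
  symm
  refine Nat.card_congr
    { toFun := fun zw => ⟨(zw.2.1.1 * zw.1, zw.2.1.2 * zw.1, zw.1),
        by linear_combination (zw.1 : R) ^ 2 * zw.2.2, zw.1.isUnit⟩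
      invFun := fun ⟨(x, y, z), hQ, hz⟩ => (hz.unit, ⟨(x * ↑hz.unit⁻¹, y * ↑hz.unit⁻¹), by
        linear_combination (↑hz.unit⁻¹ : R) ^ 2 * hQ - (d * x * ↑hz.unit⁻¹
          + e * y * ↑hz.unit⁻¹ + f * (1 + z * ↑hz.unit⁻¹)) * hz.mul_val_inv⟩)
      left_inv := fun ⟨z, ⟨(x, y), _⟩⟩ => by
        ext <;> simp
      right_inv := fun ⟨(x, y, z), _, hz⟩ => by
        ext <;> simp [mul_assoc, hz.val_inv_mul] }

theorem card_zeros_eq_card_diagonalConic {a b c d e f : R} (ha : IsUnit (2 * a))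
    (hD : IsUnit (2 * (4 * a * c - b ^ 2))) :
    Nat.card {w : R × R // a * w.1 ^ 2 + b * w.1 * w.2 + c * w.2 ^ 2 + d * w.1 + e * w.2 + f = 0} =
      Nat.card (diagonalConic (4 * (4 * a * c - b ^ 2)) 1 (-(8 * a *
        (8 * a * c * f + 2 * b * d * e - 2 * a * e ^ 2 - 2 * c * d ^ 2 - 2 * f * b ^ 2)))) := by
  have h2 : IsUnit (2 : R) := isUnit_of_mul_isUnit_left ha
  have hα := ha.mul_val_inv
  have hδ := hD.mul_val_inv
  set α := (↑ha.unit⁻¹ : R)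
  set δ := (↑hD.unit⁻¹ : R)
  set k := 4 * a * e - 2 * b * d
  let φ : R × R ≃ R × R :=
    { toFun := fun w => (2 * a * w.1 + b * w.2 + d, 2 * (4 * a * c - b ^ 2) * w.2 + k)
      invFun := fun w => (α * (w.1 - b * (δ * (w.2 - k)) - d), δ * (w.2 - k))
      left_inv := fun w => by
        have hv : δ * (2 * (4 * a * c - b ^ 2) * w.2 + k - k) = w.2 := by
          linear_combination w.2 * hδ
        ext
        · dsimp only; rw [hv]; linear_combination w.1 * hα
        · exact hv
      right_inv := fun w => by
        ext
        · dsimp only; linear_combination (w.1 - b * (δ * (w.2 - k)) - d) * hα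
        · dsimp only; linear_combination (w.2 - k) * hδ }
  refine Nat.card_congr (φ.subtypeEquiv fun w => ?_)
  simp only [φ, k, Equiv.coe_fn_mk]
  rw [diagonalConic.mem_iff, ← sub_eq_zero, ← ((h2.mul h2).mul (ha.mul hD)).mul_right_eq_zero]
  constructor <;> intro h <;> linear_combination h

end QuadraticInThreeVariables

/-- The number of triples `(x,y,z) ∈ (ℤ/pⁿℤ)³` with
`Q(x,y,z) = ax²+bxy+cy²+dxz+eyz+fz² ≡ 0 (mod pⁿ)` and `z` invertible equals
`p^{2n−2}(p−1)(p − χ(b²−4ac))`. -/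
theorem count_solutions_ternary_mod_prime_power
    (p : ℕ) [Fact p.Prime] (hodd : Odd p) (n : ℕ) (hn : 1 ≤ n)
    (a b c d e f : ℤ)
    (ha : ¬ (p : ℤ) ∣ a) (hb : ¬ (p : ℤ) ∣ (4*a*c - b^2))
    (hΔ : ¬ (p : ℤ) ∣ (8*a*c*f + 2*b*d*e - 2*a*e^2 - 2*c*d^2 - 2*f*b^2)) :
    (Nat.card {v : ZMod (p^n) × ZMod (p^n) × ZMod (p^n) //
        (a : ZMod (p^n))*v.1^2 + b*v.1*v.2.1 + c*v.2.1^2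
          + d*v.1*v.2.2 + e*v.2.1*v.2.2 + f*v.2.2^2 = 0 ∧ IsUnit v.2.2} : ℤ)
      = (p : ℤ)^(2*n - 2) * ((p : ℤ) - 1) * ((p : ℤ) - legendreSym p (b^2 - 4*a*c)) := by
  obtain ⟨n, rfl⟩ := Nat.exists_eq_add_of_le' hn
  have hp : p ≠ 2 := by rintro rfl; exact absurd hodd (by decide)
  have hpZ : Prime (p : ℤ) := Nat.prime_iff_prime_int.mp Fact.out
  have h2 : ¬ (p : ℤ) ∣ 2 := (Fact.out : p.Prime).intCast_not_dvd_two hp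
  have h4 : ¬ (p : ℤ) ∣ 4 := by simpa using hpZ.not_dvd_mul h2 h2
  have h8 : ¬ (p : ℤ) ∣ 8 := by simpa using hpZ.not_dvd_mul h4 h2
  have hunit {C : ℤ} (hC : ¬ (p : ℤ) ∣ C) : IsUnit (C : ZMod (p ^ (n + 1))) :=
    ZMod.isUnit_intCast_prime_pow n.succ_ne_zero hC
  have hconic := ZMod.card_diagonalConic_prime_pow hp (hpZ.not_dvd_mul h4 hb) (B := 1)
    hpZ.not_dvd_one (dvd_neg.not.2 (hpZ.not_dvd_mul (hpZ.not_dvd_mul h8 ha) hΔ)) n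
  push_cast at hconic
  rw [card_zeros_isUnit_eq_card_units_mul, card_zeros_eq_card_diagonalConic
    (by exact_mod_cast hunit (hpZ.not_dvd_mul h2 ha))
    (by exact_mod_cast hunit (hpZ.not_dvd_mul h2 hb)), Nat.cast_mul, hconic,
    Nat.card_eq_fintype_card, ZMod.card_units_eq_totient, Nat.totient_prime_pow_succ Fact.out,
    show -(4 * (4 * a * c - b ^ 2) * 1) = 2 ^ 2 * (b ^ 2 - 4 * a * c) by ring,
    legendreSym.mul, legendreSym.sq_one' _ ((ZMod.intCast_zmod_eq_zero_iff_dvd 2 p).not.2 h2),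
    show 2 * (n + 1) - 2 = n + n by omega]
  push_cast [Nat.cast_sub (Fact.out : p.Prime).one_le]
  ring
end

section
/- Let p be an odd prime, let a,b,c,l₁,l₂,A,B ∈ ℤ with p ∤ a and p ∤ (aB² − bAB + cA²) (equivalently p ∤ 4Δ). Set D = (al₂² − bl₁l₂ + cl₁²)(aB² − bAB + cA²). If D ≡ 0 (mod p), (aB−bA)l₁ + aAl₂ ≢ 0 (mod p), and α is the (double) root mod p of ((aB−bA)l₁ + aAl₂)t² + 2(aBl₂ − cAl₁)t + ((bB−cA)l₂ − cBl₁) ≡ 0 (mod p), then aα² + bα + c ≡ 0 (mod p). -/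
/-!
Write `d t² + 2 m t + e` for the quadratic in `t`. Its reduced discriminant factors as
`m² - d e = L Q` with `L = a l₂² - b l₁ l₂ + c l₁²` and `Q = a B² - b A B + c A²`, so `p ∣ D`
and `p ∤ Q` force `L ≡ 0`, the discriminant vanishes, and the double root satisfies
`d α ≡ -m`. Substituting, `d² (a α² + b α + c) ≡ a m² - b m d + c d² = a L Q ≡ 0`,
and `d` is invertible mod `p`.
-/

section DoubleRoot

variable {R : Type*} [CommRing R]

theorem mul_add_eq_zero_of_quadratic_eq_zero [NoZeroDivisors R] {d m e t : R}
    (hdisc : m ^ 2 = d * e) (h : d * t ^ 2 + 2 * m * t + e = 0) : d * t + m = 0 :=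
  pow_eq_zero_iff two_ne_zero |>.mp (by linear_combination d * h + hdisc)

theorem reduced_discrim_eq (a b c l₁ l₂ A B : R) :
    (a*B*l₂ - c*A*l₁)^2 - ((a*B - b*A)*l₁ + a*A*l₂) * ((b*B - c*A)*l₂ - c*B*l₁)
      = (a*l₂^2 - b*l₁*l₂ + c*l₁^2) * (a*B^2 - b*A*B + c*A^2) := by
  ring

theorem binaryForm_eval_eq (a b c l₁ l₂ A B : R) :
    a*(a*B*l₂ - c*A*l₁)^2 - b*(a*B*l₂ - c*A*l₁)*((a*B - b*A)*l₁ + a*A*l₂)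
        + c*((a*B - b*A)*l₁ + a*A*l₂)^2
      = a * ((a*l₂^2 - b*l₁*l₂ + c*l₁^2) * (a*B^2 - b*A*B + c*A^2)) := by
  ring

theorem eval_eq_zero_of_double_root [NoZeroDivisors R] (a b c l₁ l₂ A B α : R)
    (hL : a*l₂^2 - b*l₁*l₂ + c*l₁^2 = 0)
    (hden : (a*B - b*A)*l₁ + a*A*l₂ ≠ 0)
    (hroot : ((a*B - b*A)*l₁ + a*A*l₂)*α^2
        + 2*(a*B*l₂ - c*A*l₁)*α + ((b*B - c*A)*l₂ - c*B*l₁) = 0) :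
    a*α^2 + b*α + c = 0 := by
  set d := (a*B - b*A)*l₁ + a*A*l₂
  set m := a*B*l₂ - c*A*l₁
  set Q := a*B^2 - b*A*B + c*A^2
  have hlin : d*α + m = 0 := mul_add_eq_zero_of_quadratic_eq_zero
    (by linear_combination reduced_discrim_eq a b c l₁ l₂ A B + Q * hL) hroot
  have hsq : d^2 * (a*α^2 + b*α + c) = 0 := by
    linear_combination (a*(d*α - m) + b*d) * hlin
      + binaryForm_eval_eq a b c l₁ l₂ A B + a * Q * hL
  exact (mul_eq_zero.mp hsq).resolve_left (pow_ne_zero 2 hden)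

end DoubleRoot

theorem double_root_kills_denominator_general
    (p : ℕ) [Fact p.Prime]
    (a b c l₁ l₂ A B α : ℤ)
    (hAB : ¬ (p : ℤ) ∣ (a*B^2 - b*A*B + c*A^2))
    (hD : (p : ℤ) ∣ ((a*l₂^2 - b*l₁*l₂ + c*l₁^2)*(a*B^2 - b*A*B + c*A^2)))
    (hden : ¬ (p : ℤ) ∣ ((a*B - b*A)*l₁ + a*A*l₂))
    (hroot : (p : ℤ) ∣ (((a*B - b*A)*l₁ + a*A*l₂)*α^2
        + 2*(a*B*l₂ - c*A*l₁)*α + ((b*B - c*A)*l₂ - c*B*l₁))) :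
    (p : ℤ) ∣ (a*α^2 + b*α + c) := by
  have hp : Prime (p : ℤ) := Nat.prime_iff_prime_int.mp Fact.out
  have hL : (p : ℤ) ∣ (a*l₂^2 - b*l₁*l₂ + c*l₁^2) := (hp.dvd_mul.mp hD).resolve_right hAB
  rw [← ZMod.intCast_zmod_eq_zero_iff_dvd] at hL hden hroot ⊢
  push_cast at hL hden hroot ⊢
  exact eval_eq_zero_of_double_root _ _ _ _ _ _ _ _ hL hden hroot

/-- If `D ≡ 0 (mod p)` and `α` is the double root mod `p` of
`((aB−bA)l₁ + aAl₂)t² + 2(aBl₂ − cAl₁)t + ((bB−cA)l₂ − cBl₁) ≡ 0 (mod p)`,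
then `aα² + bα + c ≡ 0 (mod p)`. -/
theorem double_root_kills_denominator
    (p : ℕ) [Fact p.Prime] (hodd : Odd p)
    (a b c l₁ l₂ A B α : ℤ)
    (ha : ¬ (p : ℤ) ∣ a)
    (hAB : ¬ (p : ℤ) ∣ (a*B^2 - b*A*B + c*A^2))
    (hD : (p : ℤ) ∣ ((a*l₂^2 - b*l₁*l₂ + c*l₁^2)*(a*B^2 - b*A*B + c*A^2)))
    (hden : ¬ (p : ℤ) ∣ ((a*B - b*A)*l₁ + a*A*l₂))
    (hroot : (p : ℤ) ∣ (((a*B - b*A)*l₁ + a*A*l₂)*α^2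
        + 2*(a*B*l₂ - c*A*l₁)*α + ((b*B - c*A)*l₂ - c*B*l₁))) :
    (p : ℤ) ∣ (a*α^2 + b*α + c) :=
  double_root_kills_denominator_general p a b c l₁ l₂ A B α hAB hD hden hroot
end
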